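/- Restricted sum formulas for double zeta values: for an even integer l ≥ 4, Σ_{l1≥2, l2≥1, l1+l2=l, l1 and l2 both even} ζ(l1,l2) = (3/4)·ζ(l) and Σ_{l1≥2, l2≥1, l1+l2=l, l1 and l2 both odd} ζ(l1,l2) = (1/4)·ζ(l). -/

import Mathlib

/-- Riemann zeta value -/
noncomputable def rz (l : ℕ) : ℝ :=
  ∑' m : ℕ, if 0 < m then 1 / (m : ℝ) ^ l else 0

/-- double zeta value -/
noncomputable def dz (a b : ℕ) : ℝ :=
  ∑' p : ℕ × ℕ, if p.2 < p.1 ∧ 0 < p.2 then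
    1 / ((p.1 : ℝ) ^ a * (p.2 : ℝ) ^ b) else 0

/-- triple zeta value -/
noncomputable def tz (a b c : ℕ) : ℝ :=
  ∑' t : ℕ × ℕ × ℕ, if t.2.1 < t.1 ∧ t.2.2 < t.2.1 ∧ 0 < t.2.2 then
    1 / ((t.1 : ℝ) ^ a * (t.2.1 : ℝ) ^ b * (t.2.2 : ℝ) ^ c) else 0

/-- admissible triple indices of weight l -/
def TIdx (l : ℕ) : Finset (ℕ × ℕ × ℕ) :=
  (Finset.range (l + 1) ×ˢ Finset.range (l + 1) ×ˢ Finset.range (l + 1)).filter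
    (fun t => 2 ≤ t.1 ∧ 1 ≤ t.2.1 ∧ 1 ≤ t.2.2 ∧ t.1 + t.2.1 + t.2.2 = l)

/-
Summing the geometric series in `j`, for `s = ±1` with `s ^ l = 1` and `m > n > 0`,
  `∑_{j=2}^{l-1} s^j / (m^j n^(l-j)) = 1 / (m n^(l-2) (m - s n)) - 1 / (m^(l-1) (m - s n))`,
which is `geomHead l s (m, n) - geomTail l s (m, n)`. Summed over `m > n` by telescoping,
the first term gives `H_n / n^(l-1)` for `s = 1` and `(H_{2n} - H_n) / n^(l-1)` for `s = -1`;
summed over `0 < n < m`, the second gives `H_{m-1} / m^(l-1)`, resp.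
`(H_{2m-1} - H_m) / m^(l-1)`. The differences are `1 / n^l` and `1 / (2 n^l)`: this is
Euler's sum formula `∑ ζ(j, l-j) = ζ(l)` and, for even `l`, its alternating version
`∑ (-1)^j ζ(j, l-j) = ζ(l) / 2`. Half their sum and half their difference are the two
restricted sums.
-/
open Finset Filter Topology

theorem sum_Icc_pow_mul_pow_mul_sub {R : Type*} [CommRing R] (a b : R) (k : ℕ) :
    (∑ j ∈ Icc 2 (k + 1), a ^ j * b ^ (k + 2 - j)) * (b - a) =
      a ^ 2 * b ^ (k + 1) - a ^ (k + 2) * b := by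
  induction k with
  | zero => simp
  | succ k ih =>
    rw [sum_Icc_succ_top (by omega), add_mul, show k + 1 + 2 - (k + 1 + 1) = 1 by omega,
      sum_congr rfl fun j hj => show a ^ j * b ^ (k + 1 + 2 - j) = a ^ j * b ^ (k + 2 - j) * b by
        rw [mul_assoc, ← pow_succ, show k + 2 - j + 1 = k + 1 + 2 - j by grind],
      ← sum_mul, mul_right_comm, ih]
    ring

theorem Antitone.hasSum_sub_add {f : ℕ → ℝ} (hf : Antitone f) (h0 : Tendsto f atTop (𝓝 0))
    (d : ℕ) : HasSum (fun k => f k - f (k + d)) (∑ i ∈ range d, f i) := by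
  set g : ℕ → ℝ := fun k => ∑ i ∈ range d, f (k + i)
  have hstep : ∀ k, f k - f (k + d) = g k - g (k + 1) := fun k => by
    have h1 := sum_range_succ (fun i => f (k + i)) d
    have h2 := sum_range_succ' (fun i => f (k + i)) d
    simp only [add_zero, ← add_assoc] at h1 h2
    simp only [g, add_right_comm k 1]
    linarith
  have hg : Tendsto g atTop (𝓝 0) := by
    simpa using tendsto_finsetSum (range d) fun i _ => h0.comp (tendsto_add_atTop_nat i)
  rw [hasSum_iff_tendsto_nat_of_nonneg fun k => sub_nonneg.2 (hf (Nat.le_add_right k d))]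
  simp_rw [hstep, sum_range_sub']
  simpa [g] using tendsto_const_nhds.sub hg

theorem harmonic_nonneg (n : ℕ) : 0 ≤ harmonic n := by
  unfold harmonic
  positivity

theorem harmonic_add_sub_harmonic (a d : ℕ) :
    (harmonic (a + d) : ℝ) - harmonic a = ∑ i ∈ range d, ((a + i + 1 : ℕ) : ℝ)⁻¹ := by
  simp [harmonic, sum_range_add, add_assoc]

theorem harmonic_sub_harmonic_sub_one (n : ℕ) :
    (harmonic n : ℝ) - harmonic (n - 1) = (n : ℝ)⁻¹ := by
  cases n <;> simp [harmonic_succ]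

theorem hasSum_inv_sub_inv (a d : ℕ) :
    HasSum (fun k : ℕ => ((a + k + 1 : ℕ) : ℝ)⁻¹ - ((a + (k + d) + 1 : ℕ) : ℝ)⁻¹)
      (harmonic (a + d) - harmonic a) := by
  rw [harmonic_add_sub_harmonic]
  refine Antitone.hasSum_sub_add (f := fun k : ℕ => ((a + k + 1 : ℕ) : ℝ)⁻¹)
    (fun i j hij => ?_) ?_ d
  · dsimp only
    gcongr
  · refine ((tendsto_one_div_add_atTop_nhds_zero_nat (𝕜 := ℝ)).comp
      (tendsto_add_atTop_nat a)).congr fun k => ?_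
    simp [add_assoc, add_comm]

theorem harmonic_le_three_mul_rpow_half (n : ℕ) :
    (harmonic n : ℝ) ≤ 3 * (n : ℝ) ^ (1 / 2 : ℝ) := by
  rcases Nat.eq_zero_or_pos n with rfl | hn
  · simp
  have h1 : (1 : ℝ) ≤ (n : ℝ) ^ (1 / 2 : ℝ) := Real.one_le_rpow (by exact_mod_cast hn) (by norm_num)
  have hlog := Real.log_le_rpow_div n.cast_nonneg (by norm_num : (0 : ℝ) < 1 / 2)
  have := harmonic_le_one_add_log n
  linarith

theorem summable_harmonic_div_pow {k : ℕ} (hk : 2 ≤ k) :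
    Summable fun n : ℕ => (harmonic n : ℝ) / (n : ℝ) ^ k := by
  refine ((Real.summable_nat_rpow.2 (by norm_num : (1 / 2 - 2 : ℝ) < -1)).mul_left 3).of_nonneg_of_le
    (fun n => div_nonneg (by exact_mod_cast harmonic_nonneg n) (by positivity)) fun n => ?_
  rcases Nat.eq_zero_or_pos n with rfl | hn
  · simp only [harmonic_zero, Rat.cast_zero, zero_div]
    positivity
  have hn' : (1 : ℝ) ≤ n := by exact_mod_cast hn
  calc (harmonic n : ℝ) / (n : ℝ) ^ k ≤ 3 * (n : ℝ) ^ (1 / 2 : ℝ) / (n : ℝ) ^ 2 := by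
        gcongr
        exact harmonic_le_three_mul_rpow_half n
    _ = 3 * (n : ℝ) ^ (1 / 2 - 2 : ℝ) := by
        rw [Real.rpow_sub (by positivity), Real.rpow_two, mul_div_assoc]

theorem summable_of_nonneg_of_hasSum_fibers {α β : Type*} {f : α × β → ℝ} {u : β → ℝ}
    (hf : 0 ≤ f) (hu : ∀ b, HasSum (fun a => f (a, b)) (u b)) (hsu : Summable u) :
    Summable f := by
  rw [← (Equiv.prodComm β α).summable_iff]
  exact (summable_prod_of_nonneg (f := f ∘ Equiv.prodComm β α) fun p => hf _).2
    ⟨fun b => (hu b).summable, hsu.congr fun b => ((hu b).tsum_eq).symm⟩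

theorem hasSum_sub_of_hasSum_fibers {α : Type*} {f g : α × α → ℝ} {u v : α → ℝ}
    (hf : Summable f) (hg : Summable g) (hu : ∀ b, HasSum (fun a => f (a, b)) (u b))
    (hv : ∀ a, HasSum (fun b => g (a, b)) (v a)) :
    HasSum (fun p => f p - g p) (∑' a, (u a - v a)) := by
  have hU : HasSum u (∑' p, f p) :=
    ((Equiv.prodComm α α).symm.hasSum_iff.2 hf.hasSum).prod_fiberwise hu
  have hV : HasSum v (∑' p, g p) := hg.hasSum.prod_fiberwise hv
  rw [(hU.sub hV).tsum_eq]
  exact hf.hasSum.sub hg.hasSum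

noncomputable def dzTerm (a b : ℕ) (p : ℕ × ℕ) : ℝ :=
  if p.2 < p.1 ∧ 0 < p.2 then 1 / ((p.1 : ℝ) ^ a * (p.2 : ℝ) ^ b) else 0

noncomputable def geomHead (l : ℕ) (s : ℝ) (p : ℕ × ℕ) : ℝ :=
  if p.2 < p.1 ∧ 0 < p.2 then ((p.1 : ℝ) * (p.2 : ℝ) ^ (l - 2) * (p.1 - s * p.2))⁻¹ else 0

noncomputable def geomTail (l : ℕ) (s : ℝ) (p : ℕ × ℕ) : ℝ :=
  if p.2 < p.1 ∧ 0 < p.2 then ((p.1 : ℝ) ^ (l - 1) * (p.1 - s * p.2))⁻¹ else 0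

section SignedSums

variable {l : ℕ} {s : ℝ}

theorem cast_pos_and_cast_lt {p : ℕ × ℕ} (h : p.2 < p.1 ∧ 0 < p.2) :
    (0 : ℝ) < p.2 ∧ (p.2 : ℝ) < p.1 :=
  ⟨by exact_mod_cast h.2, by exact_mod_cast h.1⟩

theorem sub_sign_mul_pos {m n : ℕ} (hs : s = 1 ∨ s = -1) (h : n < m) : 0 < (m : ℝ) - s * n := by
  have : (n : ℝ) < m := by exact_mod_cast h
  rcases hs with rfl | rfl <;> (norm_num; linarith)

theorem sum_pow_mul_dzTerm (hl : 2 ≤ l) (hs : s = 1 ∨ s = -1) (hsl : s ^ l = 1) (p : ℕ × ℕ) :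
    ∑ j ∈ Icc 2 (l - 1), s ^ j * dzTerm j (l - j) p = geomHead l s p - geomTail l s p := by
  obtain ⟨k, rfl⟩ : ∃ k, l = k + 2 := ⟨l - 2, by omega⟩
  simp only [dzTerm, geomHead, geomTail, show k + 2 - 1 = k + 1 by omega,
    show k + 2 - 2 = k by omega]
  split_ifs with h
  swap
  · simp
  obtain ⟨hn, hnm⟩ := cast_pos_and_cast_lt h
  obtain ⟨m, n⟩ := p
  have hm : (0 : ℝ) < m := hn.trans hnm
  have hd : (m : ℝ) - n * s ≠ 0 := by rw [mul_comm]; exact (sub_sign_mul_pos hs h.1).ne'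
  have hs2 : s ^ 2 = 1 := by rcases hs with rfl | rfl <;> norm_num
  have hba : (1 / n : ℝ) - s / m ≠ 0 := by
    rw [div_sub_div _ _ hn.ne' hm.ne']
    exact div_ne_zero (fun h => hd (by linear_combination h)) (by positivity)
  rw [sum_congr rfl fun j _ => show s ^ j * (1 / ((m : ℝ) ^ j * (n : ℝ) ^ (k + 2 - j))) =
    (s / m) ^ j * (1 / n) ^ (k + 2 - j) by rw [div_pow, one_div_pow]; ring]
  apply mul_right_cancel₀ hba
  rw [sum_Icc_pow_mul_pow_mul_sub]
  simp only [div_pow, hs2, hsl]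
  field_simp
  ring

theorem dzTerm_nonneg (a b : ℕ) (p : ℕ × ℕ) : 0 ≤ dzTerm a b p := by
  unfold dzTerm
  split_ifs <;> positivity

theorem geomHead_nonneg (hs : s = 1 ∨ s = -1) (p : ℕ × ℕ) : 0 ≤ geomHead l s p := by
  unfold geomHead
  split_ifs with h
  · have := sub_sign_mul_pos hs h.1
    positivity
  · exact le_rfl

theorem geomTail_nonneg (hs : s = 1 ∨ s = -1) (p : ℕ × ℕ) : 0 ≤ geomTail l s p := by
  unfold geomTail
  split_ifs with h
  · have := sub_sign_mul_pos hs h.1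
    positivity
  · exact le_rfl

theorem geomHead_le_geomHead_one (hs : s = 1 ∨ s = -1) (p : ℕ × ℕ) :
    geomHead l s p ≤ geomHead l 1 p := by
  unfold geomHead
  split_ifs with h
  · obtain ⟨hn, hnm⟩ := cast_pos_and_cast_lt h
    have hm := hn.trans hnm
    have hA : (0 : ℝ) < p.1 * p.2 ^ (l - 2) := by positivity
    refine inv_anti₀ (mul_pos hA (sub_sign_mul_pos (Or.inl rfl) h.1))
      (mul_le_mul_of_nonneg_left ?_ hA.le)
    rcases hs with rfl | rfl <;> linarith
  · exact le_rfl

theorem geomTail_le_geomHead (hl : 2 ≤ l) (hs : s = 1 ∨ s = -1) (p : ℕ × ℕ) :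
    geomTail l s p ≤ geomHead l s p := by
  unfold geomTail geomHead
  split_ifs with h
  · obtain ⟨hn, hnm⟩ := cast_pos_and_cast_lt h
    have hm := hn.trans hnm
    have hd := sub_sign_mul_pos hs h.1
    obtain ⟨k, rfl⟩ : ∃ k, l = k + 2 := ⟨l - 2, by omega⟩
    rw [show k + 2 - 1 = k + 1 by omega, show k + 2 - 2 = k by omega, pow_succ']
    have hA : (0 : ℝ) < p.1 * p.2 ^ k := by positivity
    refine inv_anti₀ (mul_pos hA hd) (mul_le_mul_of_nonneg_right ?_ hd.le)
    gcongr
  · exact le_rfl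

theorem geomHead_eq_zero_of_le {m n : ℕ} (h : m ≤ n) : geomHead l s (m, n) = 0 :=
  if_neg fun h' => (h'.1.trans_le h).false

theorem hasSum_geomHead_fiber_iff {n : ℕ} {a : ℝ} :
    HasSum (fun m => geomHead l s (m, n)) a ↔
      HasSum (fun k => geomHead l s (k + (n + 1), n)) a := by
  rw [← hasSum_nat_add_iff' (n + 1), sum_eq_zero fun m hm =>
    geomHead_eq_zero_of_le (Nat.lt_succ_iff.1 (mem_range.1 hm)), sub_zero]

theorem hasSum_geomHead_one_fiber (hl : 2 ≤ l) (n : ℕ) :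
    HasSum (fun m => geomHead l 1 (m, n)) (harmonic n / (n : ℝ) ^ (l - 1)) := by
  have key : ∀ k : ℕ, geomHead l 1 (k + (n + 1), n) = ((n : ℝ) ^ (l - 1))⁻¹ *
      (((0 + k + 1 : ℕ) : ℝ)⁻¹ - ((0 + (k + n) + 1 : ℕ) : ℝ)⁻¹) := fun k => by
    rcases Nat.eq_zero_or_pos n with rfl | hn
    · simp [geomHead, zero_pow (show l - 1 ≠ 0 by omega)]
    have hn' : (0 : ℝ) < n := by exact_mod_cast hn
    rw [geomHead, if_pos ⟨by omega, hn⟩]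
    obtain ⟨j, rfl⟩ : ∃ j, l = j + 2 := ⟨l - 2, by omega⟩
    simp only [show j + 2 - 1 = j + 1 by omega, show j + 2 - 2 = j by omega]
    push_cast
    rw [show (k : ℝ) + (n + 1) - 1 * n = k + 1 by ring]
    field_simp
    ring
  have h := ((hasSum_inv_sub_inv 0 n).mul_left _).congr_fun key
  rw [zero_add, harmonic_zero, Rat.cast_zero, sub_zero, ← div_eq_inv_mul] at h
  rwa [hasSum_geomHead_fiber_iff]

theorem hasSum_geomHead_neg_one_fiber (hl : 2 ≤ l) (n : ℕ) :
    HasSum (fun m => geomHead l (-1) (m, n))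
      ((harmonic (2 * n) - harmonic n) / (n : ℝ) ^ (l - 1)) := by
  have key : ∀ k : ℕ, geomHead l (-1) (k + (n + 1), n) = ((n : ℝ) ^ (l - 1))⁻¹ *
      (((n + k + 1 : ℕ) : ℝ)⁻¹ - ((n + (k + n) + 1 : ℕ) : ℝ)⁻¹) := fun k => by
    rcases Nat.eq_zero_or_pos n with rfl | hn
    · simp [geomHead, zero_pow (show l - 1 ≠ 0 by omega)]
    have hn' : (0 : ℝ) < n := by exact_mod_cast hn
    rw [geomHead, if_pos ⟨by omega, hn⟩]
    obtain ⟨j, rfl⟩ : ∃ j, l = j + 2 := ⟨l - 2, by omega⟩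
    simp only [show j + 2 - 1 = j + 1 by omega, show j + 2 - 2 = j by omega]
    push_cast
    rw [show (k : ℝ) + (n + 1) - -1 * n = k + 2 * n + 1 by ring]
    field_simp
    ring
  have h := ((hasSum_inv_sub_inv n n).mul_left _).congr_fun key
  rw [← two_mul, ← div_eq_inv_mul] at h
  rwa [hasSum_geomHead_fiber_iff]

theorem hasSum_geomTail_fiber (m : ℕ) :
    HasSum (fun n => geomTail l s (m, n)) (∑ i ∈ range (m - 1), geomTail l s (m, i + 1)) := by
  have hsupp : ∀ i ∉ range (m - 1), geomTail l s (m, i + 1) = 0 := fun i hi =>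
    if_neg fun h => hi (mem_range.2 (by omega))
  have h0 : geomTail l s (m, 0) = 0 := if_neg fun h => h.2.false
  rw [← hasSum_nat_add_iff' 1, sum_range_one, h0, sub_zero]
  exact hasSum_sum_of_ne_finset_zero hsupp

theorem geomTail_add_one {m i : ℕ} (hi : i ∈ range (m - 1)) :
    geomTail l s (m, i + 1) = ((m : ℝ) ^ (l - 1))⁻¹ * ((m : ℝ) - s * (i + 1))⁻¹ := by
  rw [geomTail, if_pos ⟨by grind, i.succ_pos⟩, mul_inv]
  push_cast
  rfl

theorem hasSum_geomTail_one_fiber (m : ℕ) :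
    HasSum (fun n => geomTail l 1 (m, n)) (harmonic (m - 1) / (m : ℝ) ^ (l - 1)) := by
  convert hasSum_geomTail_fiber m using 1
  rw [sum_congr rfl fun i hi => geomTail_add_one hi, ← mul_sum, div_eq_inv_mul, harmonic,
    ← sum_range_reflect]
  push_cast
  congr 1
  refine sum_congr rfl fun i hi => ?_
  have hm : ((m - 1 - 1 - i : ℕ) : ℝ) + (i + 2) = m := by
    exact_mod_cast show m - 1 - 1 - i + (i + 2) = m by grind
  rw [← hm]
  ring_nf

theorem hasSum_geomTail_neg_one_fiber (m : ℕ) :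
    HasSum (fun n => geomTail l (-1) (m, n))
      ((harmonic (2 * m - 1) - harmonic m) / (m : ℝ) ^ (l - 1)) := by
  convert hasSum_geomTail_fiber m using 1
  rw [sum_congr rfl fun i hi => geomTail_add_one hi, ← mul_sum, div_eq_inv_mul,
    show 2 * m - 1 = m + (m - 1) by omega, harmonic_add_sub_harmonic]
  push_cast
  congr 1
  refine sum_congr rfl fun i hi => ?_
  ring_nf

theorem summable_geomHead (hl : 3 ≤ l) (hs : s = 1 ∨ s = -1) : Summable (geomHead l s) :=
  (summable_of_nonneg_of_hasSum_fibers (geomHead_nonneg (Or.inl rfl))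
    (hasSum_geomHead_one_fiber (by omega)) (summable_harmonic_div_pow (by omega))).of_nonneg_of_le
    (geomHead_nonneg hs) (geomHead_le_geomHead_one hs)

theorem summable_geomTail (hl : 3 ≤ l) (hs : s = 1 ∨ s = -1) : Summable (geomTail l s) :=
  (summable_geomHead hl hs).of_nonneg_of_le (geomTail_nonneg hs)
    (geomTail_le_geomHead (by omega) hs)

theorem summable_dzTerm {a b : ℕ} (ha : 2 ≤ a) (hb : 1 ≤ b) : Summable (dzTerm a b) := by
  refine (summable_geomHead (l := a + b) (by omega) (Or.inl rfl)).of_nonneg_of_le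
    (dzTerm_nonneg a b) fun p => ?_
  have h := sum_pow_mul_dzTerm (l := a + b) (by omega) (Or.inl rfl) (one_pow _) p
  simp only [one_pow, one_mul] at h
  calc dzTerm a b p = dzTerm a (a + b - a) p := by rw [Nat.add_sub_cancel_left]
    _ ≤ ∑ j ∈ Icc 2 (a + b - 1), dzTerm j (a + b - j) p :=
        single_le_sum (f := fun j => dzTerm j (a + b - j) p) (fun j _ => dzTerm_nonneg _ _ p)
          (mem_Icc.2 ⟨ha, by omega⟩)
    _ = geomHead (a + b) 1 p - geomTail (a + b) 1 p := h
    _ ≤ geomHead (a + b) 1 p := sub_le_self _ (geomTail_nonneg (Or.inl rfl) p)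

theorem hasSum_geomHead_sub_geomTail (hl : 3 ≤ l) (hs : s = 1 ∨ s = -1) (hsl : s ^ l = 1) :
    HasSum (fun p => geomHead l s p - geomTail l s p)
      (∑ j ∈ Icc 2 (l - 1), s ^ j * dz j (l - j)) :=
  (hasSum_sum fun j hj => ((summable_dzTerm (mem_Icc.1 hj).1 (by grind)).hasSum.mul_left
    (s ^ j))).congr_fun fun p => (sum_pow_mul_dzTerm (by omega) hs hsl p).symm

theorem rz_eq_tsum (hl : l ≠ 0) : rz l = ∑' n : ℕ, ((n : ℝ) ^ l)⁻¹ :=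
  tsum_congr fun n => by rcases Nat.eq_zero_or_pos n with rfl | hn <;> simp [*]

theorem inv_div_pow_sub_one (hl : l ≠ 0) (x : ℝ) : x⁻¹ / x ^ (l - 1) = (x ^ l)⁻¹ := by
  rw [div_eq_mul_inv, ← mul_inv, ← pow_succ', Nat.sub_add_cancel (Nat.one_le_iff_ne_zero.2 hl)]

theorem sum_dz_eq_rz (hl : 3 ≤ l) : ∑ j ∈ Icc 2 (l - 1), dz j (l - j) = rz l := by
  have h := hasSum_geomHead_sub_geomTail hl (Or.inl rfl) (one_pow l)
  simp only [one_pow, one_mul] at h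
  rw [h.unique (hasSum_sub_of_hasSum_fibers (summable_geomHead hl (Or.inl rfl))
    (summable_geomTail hl (Or.inl rfl)) (hasSum_geomHead_one_fiber (by omega))
    hasSum_geomTail_one_fiber), rz_eq_tsum (by omega)]
  refine tsum_congr fun n => ?_
  rw [← sub_div, harmonic_sub_harmonic_sub_one, inv_div_pow_sub_one (by omega)]

theorem sum_neg_one_pow_mul_dz_eq_half_rz (hl : 3 ≤ l) (hev : Even l) :
    ∑ j ∈ Icc 2 (l - 1), (-1) ^ j * dz j (l - j) = rz l / 2 := by
  have hs : (-1 : ℝ) = 1 ∨ (-1 : ℝ) = -1 := Or.inr rfl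
  rw [(hasSum_geomHead_sub_geomTail hl hs hev.neg_one_pow).unique
    (hasSum_sub_of_hasSum_fibers (summable_geomHead hl hs) (summable_geomTail hl hs)
      (hasSum_geomHead_neg_one_fiber (by omega)) hasSum_geomTail_neg_one_fiber),
    rz_eq_tsum (by omega), div_eq_inv_mul, ← tsum_mul_left]
  refine tsum_congr fun n => ?_
  rw [← sub_div, sub_sub_sub_cancel_right, harmonic_sub_harmonic_sub_one, Nat.cast_mul, mul_inv,
    mul_div_assoc, inv_div_pow_sub_one (by omega), Nat.cast_two]

theorem ite_even_and_even_sub (hl : Even l) {j : ℕ} (hj : j ≤ l) (x : ℝ) :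
    (if Even j ∧ Even (l - j) then x else 0) = (x + (-1) ^ j * x) / 2 := by
  rcases Nat.even_or_odd j with h | h
  · simp [h, Nat.even_sub hj, hl, h.neg_one_pow]
  · simp [Nat.not_even_iff_odd.2 h, h.neg_one_pow]

theorem ite_odd_and_odd_sub (hl : Even l) {j : ℕ} (hj : j ≤ l) (x : ℝ) :
    (if Odd j ∧ Odd (l - j) then x else 0) = (x - (-1) ^ j * x) / 2 := by
  rcases Nat.even_or_odd j with h | h
  · simp [Nat.not_odd_iff_even.2 h, h.neg_one_pow]
  · simp [h, Nat.odd_sub hj, Nat.not_odd_iff_even.2 hl, Nat.not_even_iff_odd.2 h, h.neg_one_pow]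

end SignedSums

theorem restricted_sum_double (l : ℕ) (hl : 4 ≤ l) (hev : Even l) :
    (∑ l1 ∈ (Finset.Icc 2 (l - 1)).filter (fun l1 => Even l1 ∧ Even (l - l1)),
      dz l1 (l - l1)) = 3 / 4 * rz l ∧
    (∑ l1 ∈ (Finset.Icc 2 (l - 1)).filter (fun l1 => Odd l1 ∧ Odd (l - l1)),
      dz l1 (l - l1)) = 1 / 4 * rz l := by
  have hsum := sum_dz_eq_rz (by omega : 3 ≤ l)
  have halt := sum_neg_one_pow_mul_dz_eq_half_rz (by omega : 3 ≤ l) hev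
  rw [sum_filter, sum_filter]
  constructor
  · rw [sum_congr rfl fun j hj => ite_even_and_even_sub hev (by grind) _, ← sum_div,
      sum_add_distrib, hsum, halt]
    ring
  · rw [sum_congr rfl fun j hj => ite_odd_and_odd_sub hev (by grind) _, ← sum_div,
      sum_sub_distrib, hsum, halt]
    ring
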